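/- Suppose the presentation ⟨X|R⟩ is side-confluent, and let φ : K⟨X⟩ → K⟨X⟩ be the linear map sending each element to its unique normal form. Then for all integers n ≥ 0 and m ≥ l_N(n), the operator φ|_{V^{⊗m−l_N(n)}} ⊗ id_{V^{⊗l_N(n)}} is a reduction operator relative to X^(m) whose kernel equals I(R)_{m−l_N(n)} ⊗ V^{⊗l_N(n)}; hence it equals F_1^{n,m}. In particular (case n = 0), the restriction of φ to V^{⊗m} is a reduction operator relative to X^(m) with kernel I(R)_m. -/

import Mathlib

open scoped TensorProduct
set_option linter.unusedSectionVars false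

def altProd {A : Type*} [Monoid A] (t s : A) (k : ℕ) : A :=
  if Even k then (t * s) ^ (k / 2) else s * (t * s) ^ (k / 2)

namespace CC

variable (K : Type*) [Field K] (X : Type*) [Fintype X] [LinearOrder X]

abbrev F : Type _ := MonoidAlgebra K (FreeMonoid X)

noncomputable def wd (w : FreeMonoid X) : F K X := MonoidAlgebra.of K (FreeMonoid X) w

def wlen (w : FreeMonoid X) : ℕ := (FreeMonoid.toList w).length

noncomputable instance : LinearOrder (FreeMonoid X) :=
  LinearOrder.lift' (fun w => FreeMonoid.toList w) (fun _ _ h => FreeMonoid.toList.injective h)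

noncomputable def lm (f : F K X) : FreeMonoid X := WithBot.unbotD 1 (f.coeff.support.max)

/-- The homogeneous component `V^{⊗m} = KX^{(m)}` of `K⟨X⟩`:
elements supported on words of length `m`. -/
noncomputable def degSub (m : ℕ) : Submodule K (F K X) where
  carrier := {f | ∀ w ∈ f.coeff.support, wlen X w = m}
  add_mem' := by
    intro a b ha hb w hw
    rcases Finset.mem_union.mp (Finsupp.support_add hw) with h | h
    · exact ha w h
    · exact hb w h
  zero_mem' := by intro w hw; simp at hw
  smul_mem' := by intro c f hf w hw; exact hf w (Finsupp.support_smul hw)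

lemma mem_degSub {m : ℕ} {f : F K X} :
    f ∈ degSub K X m ↔ ∀ w ∈ f.coeff.support, wlen X w = m := Iff.rfl

/-- `l_N(2k) = kN`, `l_N(2k+1) = kN + 1`. -/
def lN (N n : ℕ) : ℕ := if Even n then (n / 2) * N else (n / 2) * N + 1

/-- The homogeneous component `I(R)_m` of the two-sided ideal generated by `R`:
`I(R)_m = Σ_{i=0}^{m−N} V^{⊗i}·R̄·V^{⊗m−N−i}` for `m ≥ N` and `I(R)_m = 0` for `m < N`. -/
noncomputable def idealPiece (N : ℕ) (R : Set (F K X)) (m : ℕ) : Submodule K (F K X) :=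
  if m < N then ⊥
  else ⨆ i ∈ Finset.range (m - N + 1),
    degSub K X i * Submodule.span K R * degSub K X (m - N - i)

/-- The two-sided ideal `I(R)` of `K⟨X⟩` generated by `R`, as a `K`-subspace. -/
noncomputable def idealSpan (R : Set (F K X)) : Submodule K (F K X) :=
  Submodule.span K {x | ∃ u v : FreeMonoid X, ∃ g ∈ R, x = wd K X u * g * wd K X v}

/-- `J_0 = K`, `J_1 = V`, and `J_n = ⋂_{i=0}^{l_N(n)−N} V^{⊗i}·R̄·V^{⊗l_N(n)−N−i}` for `n ≥ 2`. -/
noncomputable def Jspace (N : ℕ) (R : Set (F K X)) : ℕ → Submodule K (F K X)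
  | 0 => degSub K X 0
  | 1 => degSub K X 1
  | (n + 2) => ⨅ i ∈ Finset.range (lN N (n + 2) - N + 1),
      degSub K X i * Submodule.span K R * degSub K X (lN N (n + 2) - N - i)

open Classical in
/-- The reduction `r_{u·g·v}` of the presentation `⟨X|R⟩`: the linear endomorphism of `K⟨X⟩`
fixing every word other than `u·lm(g)·v` and sending `u·lm(g)·v` to `u·(lm(g)−g)·v`. -/
noncomputable def redMap (u : FreeMonoid X) (g : F K X) (v : FreeMonoid X) :
    F K X →ₗ[K] F K X :=
  Finsupp.linearCombination K (fun w : FreeMonoid X =>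
    if w = u * lm K X g * v then wd K X u * (wd K X (lm K X g) - g) * wd K X v
    else wd K X w) ∘ₗ
    ((MonoidAlgebra.coeffLinearEquiv (R := K) : F K X ≃ₗ[K] (FreeMonoid X →₀ K)).toLinearMap)

/-- `f` is a normal form for `⟨X|R⟩` if it is fixed by every reduction. -/
def IsNormalForm (R : Set (F K X)) (f : F K X) : Prop :=
  ∀ u v : FreeMonoid X, ∀ g ∈ R, redMap K X u g v f = f

/-- `g` is a normal form of `f`: `g` is a normal form and is obtained from `f` by applying a
finite sequence of reductions of `⟨X|R⟩`. -/
def NormalFormOf (R : Set (F K X)) (f g : F K X) : Prop :=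
  IsNormalForm K X R g ∧
    ∃ L : List (FreeMonoid X × F K X × FreeMonoid X),
      (∀ p ∈ L, p.2.1 ∈ R) ∧
      g = L.foldr (fun p h => redMap K X p.1 p.2.1 p.2.2 h) f

/-- The presentation `⟨X|R⟩` is reduced: for every `f ∈ R`, `lm(f) − f` is a normal form for
`⟨X|R⟩` and `lm(f)` is a normal form for `⟨X | R∖{f}⟩`. -/
def Reduced (R : Set (F K X)) : Prop :=
  ∀ f ∈ R, IsNormalForm K X R (wd K X (lm K X f) - f) ∧
    IsNormalForm K X (R \ {f}) (wd K X (lm K X f))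

/-- `R` consists of `N`-homogeneous elements with leading coefficient `1`. -/
def NHomogLC1 (N : ℕ) (R : Set (F K X)) : Prop :=
  ∀ f ∈ R, f ∈ degSub K X N ∧ f.coeff (lm K X f) = 1

open Classical in
/-- The operator `S` of the presentation `⟨X|R⟩`: the endomorphism of `V^{⊗N}` sending `lm(f)`
to `lm(f) − f` for every `f ∈ R` and fixing all other words (extended by the identity on words
of other lengths). -/
noncomputable def Sop (R : Set (F K X)) : F K X →ₗ[K] F K X :=
  Finsupp.linearCombination K (fun w : FreeMonoid X =>
    if h : ∃ f ∈ R, lm K X f = w then wd K X w - h.choose else wd K X w) ∘ₗ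
    ((MonoidAlgebra.coeffLinearEquiv (R := K) : F K X ≃ₗ[K] (FreeMonoid X →₀ K)).toLinearMap)

/-- `S ⊗ id_{V^{⊗b}}` realized on `K⟨X⟩`: on a word of length `a + b`, apply `S` to the first
`a` letters and the identity to the last `b` letters; the identity on all other words. -/
noncomputable def applyLeft (S : F K X →ₗ[K] F K X) (a b : ℕ) : F K X →ₗ[K] F K X :=
  Finsupp.linearCombination K (fun w : FreeMonoid X =>
    if wlen X w = a + b then
      S (wd K X (FreeMonoid.ofList ((FreeMonoid.toList w).take a))) *
        wd K X (FreeMonoid.ofList ((FreeMonoid.toList w).drop a))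
    else wd K X w) ∘ₗ
    ((MonoidAlgebra.coeffLinearEquiv (R := K) : F K X ≃ₗ[K] (FreeMonoid X →₀ K)).toLinearMap)

/-- `id_{V^{⊗a}} ⊗ S` realized on `K⟨X⟩`: on a word of length `a + b`, apply the identity to
the first `a` letters and `S` to the last `b` letters; the identity on all other words. -/
noncomputable def applyRight (S : F K X →ₗ[K] F K X) (a b : ℕ) : F K X →ₗ[K] F K X :=
  Finsupp.linearCombination K (fun w : FreeMonoid X =>
    if wlen X w = a + b then
      wd K X (FreeMonoid.ofList ((FreeMonoid.toList w).take a)) *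
        S (wd K X (FreeMonoid.ofList ((FreeMonoid.toList w).drop a)))
    else wd K X w) ∘ₗ
    ((MonoidAlgebra.coeffLinearEquiv (R := K) : F K X ≃ₗ[K] (FreeMonoid X →₀ K)).toLinearMap)

/-- The presentation `⟨X|R⟩` is side-confluent: for every `1 ≤ m ≤ N−1` there exists `k ≥ 1`
with `⟨id_{V^{⊗m}}⊗S, S⊗id_{V^{⊗m}}⟩^k = ⟨S⊗id_{V^{⊗m}}, id_{V^{⊗m}}⊗S⟩^k` on `V^{⊗N+m}`. -/
def SideConfluent (N : ℕ) (R : Set (F K X)) : Prop :=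
  ∀ m : ℕ, 1 ≤ m → m ≤ N - 1 →
    ∃ k : ℕ, 1 ≤ k ∧
      ∀ f ∈ degSub K X (N + m),
        altProd (applyRight K X (Sop K X R) m N) (applyLeft K X (Sop K X R) N m) k f =
          altProd (applyLeft K X (Sop K X R) N m) (applyRight K X (Sop K X R) m N) k f

/-- The extra-condition: `(V^{⊗n}⊗R̄) ∩ (R̄⊗V^{⊗n}) ⊆ V^{⊗n−1}⊗R̄⊗V` for every `2 ≤ n ≤ N−1`. -/
def ExtraCondition (N : ℕ) (R : Set (F K X)) : Prop :=
  ∀ n : ℕ, 2 ≤ n → n ≤ N - 1 →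
    (degSub K X n * Submodule.span K R) ⊓ (Submodule.span K R * degSub K X n) ≤
      degSub K X (n - 1) * Submodule.span K R * degSub K X 1

/-- A reduction operator relative to `X^{(m)}`, realized as a linear endomorphism of `K⟨X⟩`
extended by the identity outside of `V^{⊗m}`: an idempotent operator fixing each word of
length `m` or mapping it to an element of `V^{⊗m}` all of whose monomials are strictly
smaller. -/
structure IsRedOp (m : ℕ) (T : F K X →ₗ[K] F K X) : Prop where
  idem : T ∘ₗ T = T
  le : ∀ w : FreeMonoid X, wlen X w = m →
    T (wd K X w) = wd K X w ∨
      (T (wd K X w) ∈ degSub K X m ∧ ∀ u ∈ (T (wd K X w)).coeff.support, u < w)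
  other : ∀ w : FreeMonoid X, wlen X w ≠ m → T (wd K X w) = wd K X w

/-- The kernel `I(R)_{m−l_N(n)} ⊗ V^{⊗l_N(n)}` of the reduction operator `F_1^{n,m}`. -/
noncomputable def ker1 (N : ℕ) (R : Set (F K X)) (n m : ℕ) : Submodule K (F K X) :=
  idealPiece K X N R (m - lN N n) * degSub K X (lN N n)

/-- The kernel of the reduction operator `F_2^{n,m}`: `⊥` if `m < l_N(n+1)` (so that
`F_2^{n,m} = id`), and `V^{⊗m−l_N(n+1)} ⊗ J_{n+1}` otherwise. -/
noncomputable def ker2 (N : ℕ) (R : Set (F K X)) (n m : ℕ) : Submodule K (F K X) :=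
  if m < lN N (n + 1) then ⊥
  else degSub K X (m - lN N (n + 1)) * Jspace K X N R (n + 1)

/-- The span of the normal words of length `d`, i.e. `φ(V^{⊗d})` where `φ` is the
normal-form map. -/
noncomputable def nfSub (R : Set (F K X)) (d : ℕ) : Submodule K (F K X) :=
  Submodule.span K
    {x | ∃ w : FreeMonoid X, wlen X w = d ∧ IsNormalForm K X R (wd K X w) ∧ x = wd K X w}

/-- `Γ = (id − T2)·Σ_{i odd, 1 ≤ i ≤ k−1} ⟨T2,T1⟩^i`, the image of the element `γ1` of the
confluence algebra under the `(T1,T2)`-representation. -/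
noncomputable def Gamma (T1 T2 : F K X →ₗ[K] F K X) (k : ℕ) : F K X →ₗ[K] F K X :=
  (1 - T2) * ∑ i ∈ (Finset.Icc 1 (k - 1)).filter (fun i => Odd i), altProd T2 T1 i

end CC

/-!
Reductions of `⟨X|R⟩` only subtract multiples of elements `u·g·v` (`g ∈ R`) whose leading word is
at most the word being reduced. Hence the normal-form map `φ` preserves degrees, `f - φ f` always
lies in the span of such elements (so `ker φ ∩ V^{⊗a} ⊆ I(R)_a`), and `φ` sends a non-normal word
to a combination of strictly smaller words. The converse inclusion amounts to `φ(u·g·v) = 0`, and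
its crux is that two reductions at the same word `w` agree modulo reductions at smaller words. For
non-overlapping occurrences of leading words in `w` this is a direct computation; for an overlap of
length `N + δ` with `1 ≤ δ ≤ N - 1` it follows from side-confluence, since each side of
`⟨id⊗S, S⊗id⟩^k = ⟨S⊗id, id⊗S⟩^k` first performs a single reduction and afterwards only reduces
below `w`. Everything passes factorwise to `φ|_{V^{⊗a}} ⊗ id_{V^{⊗b}}`, whose kernel is
`I(R)_a ⊗ V^{⊗b}` because `f - (φ ⊗ id) f ∈ I(R)_a ⊗ V^{⊗b}` for every `f`.
-/

lemma altProd_succ {A : Type*} [Monoid A] (t s : A) (k : ℕ) :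
    altProd t s (k + 1) = (if Even k then s else t) * altProd t s k := by
  rcases Nat.even_or_odd' k with ⟨j, rfl | rfl⟩
  · have h1 : (2 * j + 1) / 2 = j := by omega
    have h2 : 2 * j / 2 = j := by omega
    simp [altProd, h1, h2]
  · have h1 : (2 * j + 1 + 1) / 2 = j + 1 := by omega
    have h2 : (2 * j + 1) / 2 = j := by omega
    have h3 : Even (2 * j + 1 + 1) := ⟨j + 1, by ring⟩
    simp [altProd, h1, h2, h3, pow_succ', mul_assoc]

namespace CC

variable {K : Type*} [Field K] {X : Type*} [Fintype X] [LinearOrder X]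
variable {N : ℕ} {R : Set (F K X)} {S T : Set (FreeMonoid X)} {f g g₁ : F K X}
variable {phi Q Q₁ Q₂ : F K X →ₗ[K] F K X}

section Words

lemma wd_eq_single (w : FreeMonoid X) : wd K X w = MonoidAlgebra.single w 1 := rfl

lemma single_eq_smul_wd (w : FreeMonoid X) (c : K) :
    (MonoidAlgebra.single w c : F K X) = c • wd K X w := by
  rw [wd_eq_single, MonoidAlgebra.smul_single, smul_eq_mul, mul_one]

lemma wd_mul_wd (u v : FreeMonoid X) : wd K X u * wd K X v = wd K X (u * v) :=
  (map_mul (MonoidAlgebra.of K (FreeMonoid X)) u v).symm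

lemma wd_one : wd K X 1 = 1 := map_one (MonoidAlgebra.of K (FreeMonoid X))

lemma coeff_wd_apply (w x : FreeMonoid X) : (wd K X w).coeff x = if x = w then 1 else 0 := by
  simp [wd_eq_single, MonoidAlgebra.coeff_single, Finsupp.single_apply, eq_comm]

lemma support_wd (w : FreeMonoid X) : (wd K X w).coeff.support = {w} :=
  Finsupp.support_single w one_ne_zero

lemma coeff_wd_mul_mul_wd (u v x : FreeMonoid X) (g : F K X) :
    (wd K X u * g * wd K X v).coeff (u * x * v) = g.coeff x := by
  simp [wd_eq_single]

lemma wlen_mul (u v : FreeMonoid X) : wlen X (u * v) = wlen X u + wlen X v := by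
  simp [wlen, FreeMonoid.toList_mul]

lemma eq_one_of_wlen_eq_zero {w : FreeMonoid X} (h : wlen X w = 0) : w = 1 :=
  FreeMonoid.toList.injective (List.eq_nil_of_length_eq_zero h)

lemma finite_setOf_wlen_eq (d : ℕ) : {w : FreeMonoid X | wlen X w = d}.Finite :=
  (List.finite_length_eq X d).preimage FreeMonoid.toList.injective.injOn

lemma exists_mul_eq_of_wlen_le {a b c e : FreeMonoid X} (h : a * b = c * e)
    (hl : wlen X a ≤ wlen X c) : ∃ s, c = a * s ∧ b = s * e := by
  have h' : a.toList ++ b.toList = c.toList ++ e.toList := by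
    simpa [FreeMonoid.toList_mul] using congrArg FreeMonoid.toList h
  rcases List.append_eq_append_iff.mp h' with ⟨s, hc, hb⟩ | ⟨s, ha, he⟩
  · exact ⟨FreeMonoid.ofList s, FreeMonoid.toList.injective (by simpa using hc),
      FreeMonoid.toList.injective (by simpa using hb)⟩
  · have hs : s = [] := by
      have := congrArg List.length ha
      simp only [List.length_append] at this
      exact List.eq_nil_of_length_eq_zero (by unfold wlen at hl; omega)
    subst hs
    exact ⟨1, FreeMonoid.toList.injective (by simpa using ha.symm),
      FreeMonoid.toList.injective (by simpa using he.symm)⟩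

lemma exists_mul_of_wlen_eq_add {w : FreeMonoid X} {a b : ℕ} (h : wlen X w = a + b) :
    ∃ u v, w = u * v ∧ wlen X u = a ∧ wlen X v = b := by
  refine ⟨FreeMonoid.ofList (w.toList.take a), FreeMonoid.ofList (w.toList.drop a),
    FreeMonoid.toList.injective (by simp [FreeMonoid.toList_mul]), ?_, ?_⟩ <;>
  simp only [wlen, FreeMonoid.toList_ofList, List.length_take, List.length_drop] <;>
  unfold wlen at h <;> omega

lemma lex_append_of_length_eq {x y : List X} (h : List.Lex (· < ·) x y)
    (hl : x.length = y.length) (b c : List X) : List.Lex (· < ·) (x ++ b) (y ++ c) := by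
  induction h generalizing b c with
  | nil => simp at hl
  | rel hr => exact List.Lex.rel hr
  | cons _ ih => exact List.Lex.cons (ih (by simpa using hl) b c)

lemma mul_mul_lt_mul_mul {x y : FreeMonoid X} (h : x < y) (hl : wlen X x = wlen X y)
    (u v v' : FreeMonoid X) : u * x * v < u * y * v' := by
  change List.Lex (· < ·) x.toList y.toList at h
  change List.Lex (· < ·) (u * x * v).toList (u * y * v').toList
  simpa [FreeMonoid.toList_mul] using List.Lex.append_left _ (lex_append_of_length_eq h hl _ _) _

lemma mul_mul_le_mul_mul {x y : FreeMonoid X} (h : x ≤ y) (hl : wlen X x = wlen X y)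
    (u v : FreeMonoid X) : u * x * v ≤ u * y * v := by
  rcases h.eq_or_lt with rfl | h
  · exact le_rfl
  · exact (mul_mul_lt_mul_mul h hl u v v).le

def lexBelow (w : FreeMonoid X) : Set (FreeMonoid X) := {x | wlen X x = wlen X w ∧ x < w}

end Words

section Supported

lemma linearCombination_comp_coeff_wd (φ : FreeMonoid X → F K X) (w : FreeMonoid X) :
    (Finsupp.linearCombination K φ ∘ₗ
      ((MonoidAlgebra.coeffLinearEquiv (R := K) : F K X ≃ₗ[K] (FreeMonoid X →₀ K)).toLinearMap))
      (wd K X w) = φ w := by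
  change Finsupp.linearCombination K φ (Finsupp.single w 1) = φ w
  rw [Finsupp.linearCombination_single, one_smul]

lemma sum_smul_wd (f : F K X) : (f.coeff.sum fun w c => c • wd K X w) = f := by
  apply MonoidAlgebra.coeff_injective
  rw [MonoidAlgebra.coeff_finsuppSum]
  conv_rhs => rw [← Finsupp.sum_single f.coeff]
  refine Finsupp.sum_congr fun w _ => ?_
  rw [MonoidAlgebra.coeff_smul, wd_eq_single, MonoidAlgebra.coeff_single, Finsupp.smul_single,
    smul_eq_mul, mul_one]

lemma mem_of_forall_wd_mem {M : Submodule K (F K X)} {f : F K X}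
    (h : ∀ x ∈ f.coeff.support, wd K X x ∈ M) : f ∈ M := by
  rw [← sum_smul_wd f]
  exact Submodule.sum_mem _ fun x hx => M.smul_mem _ (h x hx)

lemma mul_mul_mem_of_forall_wd_mem {M : Submodule K (F K X)} {a b f : F K X}
    (h : ∀ x ∈ f.coeff.support, a * wd K X x * b ∈ M) : a * f * b ∈ M :=
  mem_of_forall_wd_mem (M := M.comap (LinearMap.mulRight K b ∘ₗ LinearMap.mulLeft K a)) h

lemma linearMap_ext_wd {A B : F K X →ₗ[K] F K X} (h : ∀ w, A (wd K X w) = B (wd K X w)) :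
    A = B :=
  LinearMap.ext fun f => sub_eq_zero.mp <|
    mem_of_forall_wd_mem (M := LinearMap.ker (A - B)) (f := f) fun x _ => by simp [h x]

variable (K) in
noncomputable def supportedIn (S : Set (FreeMonoid X)) : Submodule K (F K X) :=
  (Finsupp.supported K K S).comap (MonoidAlgebra.coeffLinearEquiv K).toLinearMap

lemma mem_supportedIn :
    f ∈ supportedIn K S ↔ ∀ x ∈ f.coeff.support, x ∈ S := by
  simp [supportedIn, Finsupp.mem_supported, Set.subset_def]

lemma wd_mem_supportedIn {x : FreeMonoid X} :
    wd K X x ∈ supportedIn K S ↔ x ∈ S := by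
  simp [mem_supportedIn, support_wd]

lemma supportedIn_mono (h : S ⊆ T) :
    supportedIn K S ≤ supportedIn K T :=
  fun _ hf => mem_supportedIn.mpr fun x hx => h (mem_supportedIn.mp hf x hx)

lemma degSub_eq_supportedIn (d : ℕ) :
    degSub K X d = supportedIn K {w | wlen X w = d} := by
  ext f
  rw [mem_degSub, mem_supportedIn]
  rfl

lemma wd_mem_degSub {w : FreeMonoid X} {d : ℕ} (h : wlen X w = d) : wd K X w ∈ degSub K X d := by
  rwa [degSub_eq_supportedIn, wd_mem_supportedIn]

lemma mul_mem_degSub {i j : ℕ} (hf : f ∈ degSub K X i) (hg : g ∈ degSub K X j) :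
    f * g ∈ degSub K X (i + j) := by
  classical
  intro x hx
  obtain ⟨u, hu, v, hv, rfl⟩ := Finset.mem_mul.mp (MonoidAlgebra.support_coeff_mul_subset f g hx)
  rw [wlen_mul, hf u hu, hg v hv]

lemma degSub_zero : degSub K X 0 = 1 := by
  apply le_antisymm
  · intro f hf
    apply mem_of_forall_wd_mem fun x hx => ?_
    rw [eq_one_of_wlen_eq_zero (hf x hx), wd_one]
    exact Submodule.mem_one.mpr ⟨1, map_one (algebraMap K (F K X))⟩
  · rw [Submodule.one_le, ← wd_one]
    exact wd_mem_degSub rfl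

end Supported

section LeadingWord

lemma lm_mem_support (hg : g ≠ 0) : lm K X g ∈ g.coeff.support := by
  obtain ⟨m, hm⟩ := Finset.max_of_nonempty
    (Finsupp.support_nonempty_iff.mpr (MonoidAlgebra.coeff_eq_zero.not.mpr hg))
  rw [lm, hm]
  exact Finset.mem_of_max hm

lemma le_lm {x : FreeMonoid X} (hx : x ∈ g.coeff.support) : x ≤ lm K X g := by
  obtain ⟨m, hm⟩ := Finset.max_of_nonempty ⟨x, hx⟩
  rw [lm, hm]
  exact WithBot.coe_le_coe.mp (hm ▸ Finset.le_max hx)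

lemma mem_support_wd_lm_sub {y : FreeMonoid X} (hlc : g.coeff (lm K X g) = 1)
    (hy : y ∈ (wd K X (lm K X g) - g).coeff.support) : y ∈ g.coeff.support ∧ y ≠ lm K X g := by
  rw [Finsupp.mem_support_iff, MonoidAlgebra.coeff_sub, Finsupp.sub_apply, coeff_wd_apply] at hy
  by_cases h : y = lm K X g
  · subst h; simp [hlc] at hy
  · rw [if_neg h, zero_sub, neg_ne_zero] at hy
    exact ⟨Finsupp.mem_support_iff.mpr hy, h⟩

namespace NHomogLC1

variable (hhom : NHomogLC1 K X N R)
include hhom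

lemma ne_zero (hg : g ∈ R) : g ≠ 0 := by
  rintro rfl
  simpa using (hhom 0 hg).2

lemma wlen_lm (hg : g ∈ R) : wlen X (lm K X g) = N :=
  (hhom g hg).1 _ (lm_mem_support (hhom.ne_zero hg))

lemma conj_mem_supportedIn (hg : g ∈ R) (u v : FreeMonoid X) :
    wd K X u * g * wd K X v ∈ supportedIn K
      {x | wlen X x = wlen X (u * lm K X g * v) ∧ x ≤ u * lm K X g * v} := by
  refine mul_mul_mem_of_forall_wd_mem fun y hy => ?_
  have hy' : wlen X y = wlen X (lm K X g) := by rw [(hhom g hg).1 y hy, hhom.wlen_lm hg]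
  rw [wd_mul_wd, wd_mul_wd, wd_mem_supportedIn]
  exact ⟨by simp only [wlen_mul, hy'], mul_mul_le_mul_mul (le_lm hy) hy' u v⟩

lemma wlen_eq_and_lt_of_mem_support_wd_lm_sub (hg : g ∈ R) {y : FreeMonoid X}
    (hy : y ∈ (wd K X (lm K X g) - g).coeff.support) : wlen X y = N ∧ y < lm K X g := by
  obtain ⟨hyg, hne⟩ := mem_support_wd_lm_sub (hhom g hg).2 hy
  exact ⟨(hhom g hg).1 y hyg, lt_of_le_of_ne (le_lm hyg) hne⟩

lemma wd_sub_conj_mem_supportedIn (hg : g ∈ R) (u v : FreeMonoid X) :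
    wd K X (u * lm K X g * v) - wd K X u * g * wd K X v ∈
      supportedIn K (lexBelow (u * lm K X g * v)) := by
  have h : wd K X (u * lm K X g * v) - wd K X u * g * wd K X v =
      wd K X u * (wd K X (lm K X g) - g) * wd K X v := by
    simp only [mul_sub, sub_mul, wd_mul_wd]
  rw [h]
  refine mul_mul_mem_of_forall_wd_mem fun y hy => ?_
  obtain ⟨hyN, hlt⟩ := hhom.wlen_eq_and_lt_of_mem_support_wd_lm_sub hg hy
  have hy' : wlen X y = wlen X (lm K X g) := by rw [hyN, hhom.wlen_lm hg]
  rw [wd_mul_wd, wd_mul_wd, wd_mem_supportedIn]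
  exact ⟨by simp only [wlen_mul, hy'], mul_mul_lt_mul_mul hlt hy' u v v⟩

end NHomogLC1

lemma redMap_apply (u : FreeMonoid X) (g : F K X) (v : FreeMonoid X) (f : F K X) :
    redMap K X u g v f = f - f.coeff (u * lm K X g * v) • (wd K X u * g * wd K X v) := by
  induction f using MonoidAlgebra.induction_linear with
  | zero => simp
  | add f h hf hh =>
      rw [map_add, hf, hh, MonoidAlgebra.coeff_add, Finsupp.add_apply, add_smul]
      abel
  | single x c =>
      rw [single_eq_smul_wd, map_smul, redMap, linearCombination_comp_coeff_wd,
        MonoidAlgebra.coeff_smul, Finsupp.smul_apply, coeff_wd_apply, smul_eq_mul]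
      rcases eq_or_ne x (u * lm K X g * v) with rfl | hx
      · rw [if_pos rfl, if_pos rfl, mul_one, ← wd_mul_wd, ← wd_mul_wd, mul_sub, sub_mul, smul_sub]
      · rw [if_neg hx, if_neg hx.symm, mul_zero, zero_smul, sub_zero]

lemma IsNormalForm.coeff_eq_zero (hhom : NHomogLC1 K X N R) (hf : IsNormalForm K X R f)
    (hg : g ∈ R) (u v : FreeMonoid X) : f.coeff (u * lm K X g * v) = 0 := by
  have h := hf u v g hg
  rw [redMap_apply, sub_eq_self, smul_eq_zero] at h
  refine h.resolve_right fun h0 => ?_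
  have := congrArg (fun p : F K X => p.coeff (u * lm K X g * v)) h0
  simp [coeff_wd_mul_mul_wd, (hhom g hg).2] at this

lemma exists_eq_of_not_isNormalForm_wd {w : FreeMonoid X} (h : ¬ IsNormalForm K X R (wd K X w)) :
    ∃ u v, ∃ g ∈ R, u * lm K X g * v = w := by
  simp only [IsNormalForm, not_forall] at h
  obtain ⟨u, v, g, hg, hne⟩ := h
  refine ⟨u, v, g, hg, by_contra fun hw => hne ?_⟩
  rw [redMap_apply, coeff_wd_apply, if_neg hw, zero_smul, sub_zero]

lemma Reduced.lm_injOn (hhom : NHomogLC1 K X N R) (hred : Reduced K X R) :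
    Set.InjOn (lm K X) R := by
  intro f hf g hg h
  by_contra hne
  have h2 := (hred g hg).2 1 1 f ⟨hf, hne⟩
  rw [redMap_apply, one_mul, mul_one, h, coeff_wd_apply, if_pos rfl, one_smul, wd_one, one_mul,
    mul_one, sub_eq_self] at h2
  exact hhom.ne_zero hf h2

end LeadingWord

section GenSpan

def IsLexLower (S : Set (FreeMonoid X)) : Prop :=
  ∀ ⦃x y : FreeMonoid X⦄, wlen X x = wlen X y → x ≤ y → y ∈ S → x ∈ S

lemma isLexLower_lexBelow (w : FreeMonoid X) : IsLexLower (lexBelow w) :=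
  fun _ _ hxy hle hy => ⟨hxy.trans hy.1, hle.trans_lt hy.2⟩

lemma isLexLower_setOf_wlen_eq (d : ℕ) : IsLexLower {w : FreeMonoid X | wlen X w = d} :=
  fun _ _ hxy _ hy => hxy.trans hy

noncomputable def genSpan (R : Set (F K X)) (S : Set (FreeMonoid X)) : Submodule K (F K X) :=
  Submodule.span K {p | ∃ u v, ∃ g ∈ R, u * lm K X g * v ∈ S ∧ p = wd K X u * g * wd K X v}

lemma conj_mem_genSpan (hg : g ∈ R) {u v : FreeMonoid X} (h : u * lm K X g * v ∈ S) :
    wd K X u * g * wd K X v ∈ genSpan R S :=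
  Submodule.subset_span ⟨u, v, g, hg, h, rfl⟩

lemma conj_mem_genSpan_of_mem {p : F K X} (hp : p ∈ genSpan R S) {u v : FreeMonoid X}
    (h : ∀ x ∈ S, u * x * v ∈ T) : wd K X u * p * wd K X v ∈ genSpan R T := by
  refine Submodule.span_induction (p := fun p _ => wd K X u * p * wd K X v ∈ genSpan R T)
    ?_ (by simp) (fun a b _ _ ha hb => by simpa [mul_add, add_mul] using add_mem ha hb)
    (fun c a _ ha => by simpa using Submodule.smul_mem _ c ha) hp
  rintro _ ⟨u', v', g, hg, hS, rfl⟩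
  have e : wd K X u * (wd K X u' * g * wd K X v') * wd K X v =
      wd K X (u * u') * g * wd K X (v' * v) := by
    simp only [← wd_mul_wd, mul_assoc]
  rw [e]
  exact conj_mem_genSpan hg (by simpa [mul_assoc] using h _ hS)

lemma genSpan_le_supportedIn (hhom : NHomogLC1 K X N R) (hS : IsLexLower S) :
    genSpan R S ≤ supportedIn K S := by
  rw [genSpan, Submodule.span_le]
  rintro _ ⟨u, v, g, hg, hw, rfl⟩
  exact supportedIn_mono (fun x hx => hS hx.1 hx.2 hw) (hhom.conj_mem_supportedIn hg u v)

lemma redMap_mem_supportedIn (hhom : NHomogLC1 K X N R) (hS : IsLexLower S) (hg : g ∈ R)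
    (u v : FreeMonoid X) (hf : f ∈ supportedIn K S) :
    redMap K X u g v f ∈ supportedIn K S ∧ f - redMap K X u g v f ∈ genSpan R S := by
  rw [redMap_apply, sub_sub_cancel]
  by_cases hc : f.coeff (u * lm K X g * v) = 0
  · simp [hc, hf]
  · have hgen := conj_mem_genSpan hg (mem_supportedIn.mp hf _ (Finsupp.mem_support_iff.mpr hc))
    exact ⟨sub_mem hf (Submodule.smul_mem _ _ (genSpan_le_supportedIn hhom hS hgen)),
      Submodule.smul_mem _ _ hgen⟩

lemma foldr_redMap_induction (P : F K X → Prop)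
    (hstep : ∀ u v : FreeMonoid X, ∀ g ∈ R, ∀ f, P f → P (redMap K X u g v f))
    (L : List (FreeMonoid X × F K X × FreeMonoid X)) (hL : ∀ p ∈ L, p.2.1 ∈ R)
    (hf : P f) : P (L.foldr (fun p h => redMap K X p.1 p.2.1 p.2.2 h) f) := by
  induction L with
  | nil => exact hf
  | cons p L ih =>
      exact hstep p.1 p.2.2 p.2.1 (hL p (by simp)) _ (ih fun q hq => hL q (by simp [hq]))

lemma NormalFormOf.mem_supportedIn (hhom : NHomogLC1 K X N R) (hS : IsLexLower S) {f' : F K X}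
    (h : NormalFormOf K X R f f') (hf : f ∈ supportedIn K S) :
    f' ∈ supportedIn K S ∧ f - f' ∈ genSpan R S := by
  obtain ⟨-, L, hL, rfl⟩ := h
  refine foldr_redMap_induction (fun y => y ∈ supportedIn K S ∧ f - y ∈ genSpan R S)
    (fun u v g hg y hy => ?_) L hL ⟨hf, by simp⟩
  obtain ⟨h₁, h₂⟩ := redMap_mem_supportedIn hhom hS hg u v hy.1
  exact ⟨h₁, by simpa using add_mem hy.2 h₂⟩

lemma NormalFormOf.eq_of_isNormalForm {f' : F K X} (h : NormalFormOf K X R f f')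
    (hf : IsNormalForm K X R f) : f' = f := by
  obtain ⟨-, L, hL, rfl⟩ := h
  exact foldr_redMap_induction (· = f) (fun u v g hg y hy => hy ▸ hf u v g hg) L hL rfl

end GenSpan

section Tensor

lemma applyLeft_wd_mul (T : F K X →ₗ[K] F K X) {a b : ℕ} {u v : FreeMonoid X}
    (hu : wlen X u = a) (hv : wlen X v = b) :
    applyLeft K X T a b (wd K X (u * v)) = T (wd K X u) * wd K X v := by
  rw [applyLeft, linearCombination_comp_coeff_wd, if_pos (by rw [wlen_mul, hu, hv])]
  simp [FreeMonoid.toList_mul, List.take_left' hu, List.drop_left' hu]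

lemma applyRight_wd_mul (T : F K X →ₗ[K] F K X) {a b : ℕ} {u v : FreeMonoid X}
    (hu : wlen X u = a) (hv : wlen X v = b) :
    applyRight K X T a b (wd K X (u * v)) = wd K X u * T (wd K X v) := by
  rw [applyRight, linearCombination_comp_coeff_wd, if_pos (by rw [wlen_mul, hu, hv])]
  simp [FreeMonoid.toList_mul, List.take_left' hu, List.drop_left' hu]

lemma applyLeft_wd_of_wlen_ne (T : F K X →ₗ[K] F K X) {a b : ℕ} {w : FreeMonoid X}
    (hw : wlen X w ≠ a + b) : applyLeft K X T a b (wd K X w) = wd K X w := by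
  rw [applyLeft, linearCombination_comp_coeff_wd, if_neg hw]

lemma applyLeft_mul (T : F K X →ₗ[K] F K X) {a b : ℕ} {p q : F K X}
    (hp : p ∈ degSub K X a) (hq : q ∈ degSub K X b) :
    applyLeft K X T a b (p * q) = T p * q := by
  suffices h : ∀ q ∈ degSub K X b, ∀ x ∈ p.coeff.support,
      applyLeft K X T a b (wd K X x * q) = T (wd K X x) * q by
    conv_lhs => rw [← sum_smul_wd p]
    conv_rhs => rw [← sum_smul_wd p]
    simp only [Finsupp.sum, Finset.sum_mul, map_sum, smul_mul_assoc, map_smul]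
    exact Finset.sum_congr rfl fun x hx => by rw [h q hq x hx]
  intro q hq x hx
  conv_lhs => rw [← sum_smul_wd q]
  conv_rhs => rw [← sum_smul_wd q]
  simp only [Finsupp.sum, Finset.mul_sum, map_sum, mul_smul_comm, map_smul]
  refine Finset.sum_congr rfl fun y hy => ?_
  rw [wd_mul_wd, applyLeft_wd_mul T (hp x hx) (hq y hy)]

end Tensor

section Confluence

def ReducesIn (R : Set (F K X)) (S : Set (FreeMonoid X)) (Q : F K X →ₗ[K] F K X) : Prop :=
  ∀ y ∈ supportedIn K S, Q y ∈ supportedIn K S ∧ y - Q y ∈ genSpan R S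

lemma ReducesIn.one : ReducesIn R S 1 :=
  fun y hy => ⟨hy, by simp⟩

lemma ReducesIn.mul (h₁ : ReducesIn R S Q₁) (h₂ : ReducesIn R S Q₂) :
    ReducesIn R S (Q₁ * Q₂) := by
  intro y hy
  obtain ⟨hy₂, hm₂⟩ := h₂ y hy
  obtain ⟨hy₁, hm₁⟩ := h₁ _ hy₂
  exact ⟨hy₁, by simpa using add_mem hm₂ hm₁⟩

lemma ReducesIn.exists_altProd_eq_mul (h₁ : ReducesIn R S Q₁) (h₂ : ReducesIn R S Q₂) {k : ℕ}
    (hk : 1 ≤ k) : ∃ C, ReducesIn R S C ∧ altProd Q₁ Q₂ k = C * Q₂ := by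
  induction k, hk using Nat.le_induction with
  | base => exact ⟨1, .one, by simp [altProd]⟩
  | succ k _ ih =>
      obtain ⟨C, hC, hk⟩ := ih
      refine ⟨(if Even k then Q₂ else Q₁) * C, ?_, by rw [altProd_succ, hk, mul_assoc]⟩
      split_ifs
      exacts [h₂.mul hC, h₁.mul hC]

lemma ReducesIn.sub_mem_genSpan_of_altProd_eq (h₁ : ReducesIn R S Q₁) (h₂ : ReducesIn R S Q₂)
    {k : ℕ} (hk : 1 ≤ k) {y : F K X} (hy₁ : Q₁ y ∈ supportedIn K S)
    (hy₂ : Q₂ y ∈ supportedIn K S) (h : altProd Q₁ Q₂ k y = altProd Q₂ Q₁ k y) :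
    Q₁ y - Q₂ y ∈ genSpan R S := by
  obtain ⟨C, hC, hC'⟩ := h₁.exists_altProd_eq_mul h₂ hk
  obtain ⟨D, hD, hD'⟩ := h₂.exists_altProd_eq_mul h₁ hk
  rw [hC', hD', Module.End.mul_apply, Module.End.mul_apply] at h
  have e : Q₁ y - Q₂ y = (Q₁ y - D (Q₁ y)) - (Q₂ y - C (Q₂ y)) := by rw [h]; abel
  rw [e]
  exact sub_mem (hD _ hy₁).2 (hC _ hy₂).2

lemma reducesIn_of_forall_wd (hhom : NHomogLC1 K X N R) (hS : IsLexLower S)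
    (h : ∀ x ∈ S, Q (wd K X x) = wd K X x ∨
      ∃ u v, ∃ g ∈ R, u * lm K X g * v = x ∧ Q (wd K X x) = wd K X x - wd K X u * g * wd K X v) :
    ReducesIn R S Q := by
  intro y hy
  suffices hmem : y ∈ (supportedIn K S).comap Q ⊓ (genSpan R S).comap (LinearMap.id - Q) from
    hmem
  refine mem_of_forall_wd_mem fun x hx => ?_
  have hxS := mem_supportedIn.mp hy x hx
  rcases h x hxS with hQ | ⟨u, v, g, hg, rfl, hQ⟩
  · exact ⟨by simpa [hQ] using wd_mem_supportedIn.mpr hxS, by simp [hQ]⟩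
  · have hred : Q (wd K X (u * lm K X g * v)) = redMap K X u g v (wd K X (u * lm K X g * v)) := by
      rw [hQ, redMap_apply, coeff_wd_apply, if_pos rfl, one_smul]
    simpa [hred] using redMap_mem_supportedIn hhom hS hg u v (wd_mem_supportedIn.mpr hxS)

end Confluence

section Sop

lemma Sop_wd_of_not_exists {p : FreeMonoid X} (h : ¬ ∃ f ∈ R, lm K X f = p) :
    Sop K X R (wd K X p) = wd K X p := by
  rw [Sop, linearCombination_comp_coeff_wd, dif_neg h]

variable (hhom : NHomogLC1 K X N R) (hred : Reduced K X R)
include hhom hred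

lemma Sop_wd_lm (hg : g ∈ R) : Sop K X R (wd K X (lm K X g)) = wd K X (lm K X g) - g := by
  have hex : ∃ f ∈ R, lm K X f = lm K X g := ⟨g, hg, rfl⟩
  rw [Sop, linearCombination_comp_coeff_wd, dif_pos hex,
    Reduced.lm_injOn hhom hred hex.choose_spec.1 hg hex.choose_spec.2]

lemma applyLeft_Sop_wd_lm_mul (hg : g ∈ R) {δ : ℕ} {t : FreeMonoid X} (ht : wlen X t = δ) :
    applyLeft K X (Sop K X R) N δ (wd K X (lm K X g * t)) =
      wd K X (lm K X g * t) - wd K X 1 * g * wd K X t := by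
  rw [applyLeft_wd_mul _ (hhom.wlen_lm hg) ht, Sop_wd_lm hhom hred hg, wd_one, one_mul, sub_mul,
    wd_mul_wd]

lemma applyRight_Sop_wd_mul_lm (hg : g ∈ R) {δ : ℕ} {t : FreeMonoid X} (ht : wlen X t = δ) :
    applyRight K X (Sop K X R) δ N (wd K X (t * lm K X g)) =
      wd K X (t * lm K X g) - wd K X t * g * wd K X 1 := by
  rw [applyRight_wd_mul _ ht (hhom.wlen_lm hg), Sop_wd_lm hhom hred hg, wd_one, mul_one, mul_sub,
    wd_mul_wd]

lemma reducesIn_applyLeft_Sop {δ : ℕ} (hS : IsLexLower S) (hSd : ∀ x ∈ S, wlen X x = N + δ) :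
    ReducesIn R S (applyLeft K X (Sop K X R) N δ) := by
  refine reducesIn_of_forall_wd hhom hS fun x hx => ?_
  obtain ⟨p, q, rfl, hp, hq⟩ := exists_mul_of_wlen_eq_add (hSd x hx)
  by_cases hlm : ∃ g ∈ R, lm K X g = p
  · obtain ⟨g, hg, rfl⟩ := hlm
    exact .inr ⟨1, q, g, hg, by rw [one_mul], applyLeft_Sop_wd_lm_mul hhom hred hg hq⟩
  · left
    rw [applyLeft_wd_mul _ hp hq, Sop_wd_of_not_exists hlm, wd_mul_wd]

lemma reducesIn_applyRight_Sop {δ : ℕ} (hS : IsLexLower S) (hSd : ∀ x ∈ S, wlen X x = δ + N) :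
    ReducesIn R S (applyRight K X (Sop K X R) δ N) := by
  refine reducesIn_of_forall_wd hhom hS fun x hx => ?_
  obtain ⟨q, p, rfl, hq, hp⟩ := exists_mul_of_wlen_eq_add (hSd x hx)
  by_cases hlm : ∃ g ∈ R, lm K X g = p
  · obtain ⟨g, hg, rfl⟩ := hlm
    exact .inr ⟨q, 1, g, hg, by rw [mul_one], applyRight_Sop_wd_mul_lm hhom hred hg hq⟩
  · left
    rw [applyRight_wd_mul _ hq hp, Sop_wd_of_not_exists hlm, wd_mul_wd]

end Sop

section CriticalPairs

variable (hhom : NHomogLC1 K X N R) (hred : Reduced K X R) (hside : SideConfluent K X N R)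
include hhom hred hside

lemma overlap_mem_genSpan {δ : ℕ} (hδ₁ : 1 ≤ δ) (hδ₂ : δ ≤ N - 1) (hg : g ∈ R) (hg₁ : g₁ ∈ R)
    {t t' : FreeMonoid X} (hz : lm K X g * t = t' * lm K X g₁) (ht : wlen X t = δ) :
    g * wd K X t - wd K X t' * g₁ ∈ genSpan R (lexBelow (lm K X g * t)) := by
  have hzlen : wlen X (lm K X g * t) = N + δ := by rw [wlen_mul, hhom.wlen_lm hg, ht]
  have ht' : wlen X t' = δ := by
    have := hzlen
    rw [hz, wlen_mul, hhom.wlen_lm hg₁] at this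
    omega
  have hS := isLexLower_lexBelow (lm K X g * t)
  have hTL := reducesIn_applyLeft_Sop hhom hred hS fun x hx => hx.1.trans hzlen
  have hTR := reducesIn_applyRight_Sop hhom hred (δ := δ) hS fun x hx => by
    rw [hx.1, hzlen, add_comm]
  have hL := applyLeft_Sop_wd_lm_mul hhom hred hg ht
  have hR := applyRight_Sop_wd_mul_lm hhom hred hg₁ ht'
  have hLmem := hhom.wd_sub_conj_mem_supportedIn hg 1 t
  have hRmem := hhom.wd_sub_conj_mem_supportedIn hg₁ t' 1
  rw [one_mul] at hLmem
  rw [mul_one, ← hz] at hRmem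
  rw [← hz] at hR
  obtain ⟨k, hk, hcomm⟩ := hside δ hδ₁ hδ₂
  have key := hTR.sub_mem_genSpan_of_altProd_eq hTL hk (hR ▸ hRmem) (hL ▸ hLmem)
    (hcomm _ (wd_mem_degSub hzlen))
  rw [hL, hR, wd_one, one_mul, mul_one, sub_sub_sub_cancel_left] at key
  exact key

lemma conj_sub_conj_mem_genSpan_of_wlen_le {u v u₁ v₁ : FreeMonoid X} (hg : g ∈ R)
    (hg₁ : g₁ ∈ R) (h : u * lm K X g * v = u₁ * lm K X g₁ * v₁) (hu : wlen X u ≤ wlen X u₁) :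
    wd K X u * g * wd K X v - wd K X u₁ * g₁ * wd K X v₁ ∈
      genSpan R (lexBelow (u * lm K X g * v)) := by
  have hlg := hhom.wlen_lm hg
  have hlg₁ := hhom.wlen_lm hg₁
  obtain ⟨s, rfl, hs⟩ := exists_mul_eq_of_wlen_le (by simpa only [mul_assoc] using h) hu
  rcases Nat.lt_or_ge (wlen X s) N with hsN | hsN
  · obtain ⟨t, hst, rfl⟩ := exists_mul_eq_of_wlen_le (c := s * lm K X g₁)
      (by rw [hs, mul_assoc]) (by rw [wlen_mul, hlg, hlg₁]; omega)
    have ht : wlen X t = wlen X s := by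
      have := congrArg (wlen X) hst
      rw [wlen_mul, wlen_mul, hlg, hlg₁] at this
      omega
    rcases Nat.eq_zero_or_pos (wlen X s) with hs0 | hs0
    · obtain rfl := eq_one_of_wlen_eq_zero hs0
      obtain rfl := eq_one_of_wlen_eq_zero (ht.trans hs0)
      rw [one_mul, mul_one] at hst
      obtain rfl := Reduced.lm_injOn hhom hred hg₁ hg hst
      simp
    · have core := overlap_mem_genSpan hhom hred hside hs0 (by omega) hg hg₁ hst.symm ht
      have e : wd K X u * g * wd K X (t * v₁) - wd K X (u * s) * g₁ * wd K X v₁ =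
          wd K X u * (g * wd K X t - wd K X s * g₁) * wd K X v₁ := by
        simp only [← wd_mul_wd, mul_sub, sub_mul, mul_assoc]
      rw [e]
      refine conj_mem_genSpan_of_mem core fun x hx => ⟨?_, ?_⟩
      · simp only [wlen_mul, hx.1] at *
        omega
      · simpa only [mul_assoc] using mul_mul_lt_mul_mul hx.2 hx.1 u v₁ v₁
  · obtain ⟨t, rfl, rfl⟩ := exists_mul_eq_of_wlen_le hs (by rw [hlg]; exact hsN)
    have e : wd K X u * g * wd K X (t * (lm K X g₁ * v₁)) - wd K X (u * (lm K X g * t)) * g₁ *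
        wd K X v₁ = wd K X u * g * wd K X t * (wd K X (lm K X g₁) - g₁) * wd K X v₁ -
          wd K X u * (wd K X (lm K X g) - g) * (wd K X t * g₁ * wd K X v₁) := by
      simp only [← wd_mul_wd, mul_sub, sub_mul, mul_assoc]
      abel
    rw [e]
    refine sub_mem (mul_mul_mem_of_forall_wd_mem fun y hy => ?_)
      (mul_mul_mem_of_forall_wd_mem fun y hy => ?_)
    · obtain ⟨hyN, hlt⟩ := hhom.wlen_eq_and_lt_of_mem_support_wd_lm_sub hg₁ hy
      have e' : wd K X u * g * wd K X t * wd K X y * wd K X v₁ =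
          wd K X u * g * wd K X (t * y * v₁) := by
        simp only [← wd_mul_wd, mul_assoc]
      rw [e']
      refine conj_mem_genSpan hg ⟨by simp only [wlen_mul, hyN, hlg₁]; omega, ?_⟩
      simpa only [mul_assoc] using
        mul_mul_lt_mul_mul hlt (hyN.trans hlg₁.symm) (u * lm K X g * t) v₁ v₁
    · obtain ⟨hyN, hlt⟩ := hhom.wlen_eq_and_lt_of_mem_support_wd_lm_sub hg hy
      have e' : wd K X u * wd K X y * (wd K X t * g₁ * wd K X v₁) =
          wd K X (u * y * t) * g₁ * wd K X v₁ := by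
        simp only [← wd_mul_wd, mul_assoc]
      rw [e']
      refine conj_mem_genSpan hg₁ ⟨by simp only [wlen_mul, hyN, hlg, hlg₁]; omega, ?_⟩
      simpa only [mul_assoc] using
        mul_mul_lt_mul_mul hlt (hyN.trans hlg.symm) u (t * (lm K X g₁ * v₁)) _

lemma conj_sub_conj_mem_genSpan {u v u₁ v₁ : FreeMonoid X} (hg : g ∈ R) (hg₁ : g₁ ∈ R)
    (h : u * lm K X g * v = u₁ * lm K X g₁ * v₁) :
    wd K X u * g * wd K X v - wd K X u₁ * g₁ * wd K X v₁ ∈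
      genSpan R (lexBelow (u * lm K X g * v)) := by
  rcases le_total (wlen X u) (wlen X u₁) with hu | hu
  · exact conj_sub_conj_mem_genSpan_of_wlen_le hhom hred hside hg hg₁ h hu
  · rw [← neg_sub, h]
    exact neg_mem (conj_sub_conj_mem_genSpan_of_wlen_le hhom hred hside hg₁ hg h.symm hu)

end CriticalPairs

section NormalFormMap

lemma NormalFormOf.wd_eq_or (hhom : NHomogLC1 K X N R) {w : FreeMonoid X}
    (h : NormalFormOf K X R (wd K X w) f) :
    f = wd K X w ∨ ∃ u v, ∃ g ∈ R, u * lm K X g * v = w ∧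
      wd K X w - wd K X u * g * wd K X v - f ∈ genSpan R (lexBelow w) := by
  obtain ⟨-, L, hL, rfl⟩ := h
  refine foldr_redMap_induction (fun y => y = wd K X w ∨ ∃ u v, ∃ g ∈ R, u * lm K X g * v = w ∧
    wd K X w - wd K X u * g * wd K X v - y ∈ genSpan R (lexBelow w))
    (fun u' v' g' hg' y hy => ?_) L hL (Or.inl rfl)
  rcases hy with rfl | ⟨u, v, g, hg, rfl, hm⟩
  · rw [redMap_apply, coeff_wd_apply]
    split_ifs with hw
    · refine Or.inr ⟨u', v', g', hg', hw, ?_⟩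
      rw [← hw, one_smul, sub_self]
      exact zero_mem _
    · exact Or.inl (by rw [zero_smul, sub_zero])
  · have hy : y ∈ supportedIn K (lexBelow (u * lm K X g * v)) := by
      have e : y = (wd K X (u * lm K X g * v) - wd K X u * g * wd K X v) -
          (wd K X (u * lm K X g * v) - wd K X u * g * wd K X v - y) := by abel
      rw [e]
      exact sub_mem (hhom.wd_sub_conj_mem_supportedIn hg u v)
        (genSpan_le_supportedIn hhom (isLexLower_lexBelow _) hm)
    refine Or.inr ⟨u, v, g, hg, rfl, ?_⟩
    simpa [sub_add_sub_cancel] using add_mem hm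
      (redMap_mem_supportedIn hhom (isLexLower_lexBelow _) hg' u' v' hy).2

variable (hhom : NHomogLC1 K X N R) (hphi : ∀ f : F K X, NormalFormOf K X R f (phi f))
include hhom hphi

/-- Well-founded induction on the leading word `w = u·lm(g)·v` among the finitely many words of
its length: `phi (wd w)` is reached through a first reduction `u₁·g₁·v₁` at `w`, which `phi`
kills up to lower terms, and by local confluence `u·g·v ≡ u₁·g₁·v₁` modulo lower terms. -/
theorem phi_conj_eq_zero (hred : Reduced K X R) (hside : SideConfluent K X N R) (hg : g ∈ R) (u v : FreeMonoid X) : phi (wd K X u * g * wd K X v) = 0 := by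
  suffices h : ∀ w, ∀ u v, ∀ g ∈ R, u * lm K X g * v = w → phi (wd K X u * g * wd K X v) = 0 from
    h _ u v g hg rfl
  intro w
  refine (finite_setOf_wlen_eq (wlen X w)).wellFoundedOn.induction (r := (· < ·)) rfl
    (P := fun w => ∀ u v, ∀ g ∈ R, u * lm K X g * v = w → phi (wd K X u * g * wd K X v) = 0) ?_
  intro y hy ih u v g hg hw
  have hker : genSpan R (lexBelow y) ≤ LinearMap.ker phi := by
    rw [genSpan, Submodule.span_le]
    rintro _ ⟨u', v', g', hg', hlt, rfl⟩
    exact ih _ (hlt.1.trans hy) hlt.2 u' v' g' hg' rfl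
  have hidem : phi (phi (wd K X y)) = phi (wd K X y) :=
    (hphi _).eq_of_isNormalForm (hphi _).1
  obtain ⟨u₁, v₁, g₁, hg₁, hw₁, hm⟩ := ((hphi (wd K X y)).wd_eq_or hhom).resolve_left fun h => by
    have h0 := (hphi (wd K X y)).1.coeff_eq_zero hhom hg u v
    rw [h, coeff_wd_apply, if_pos hw] at h0
    exact one_ne_zero h0
  have h₁ : phi (wd K X u₁ * g₁ * wd K X v₁) = 0 := by
    simpa [hidem] using hker hm
  have hdiff := hker (hw ▸ conj_sub_conj_mem_genSpan hhom hred hside hg hg₁ (hw.trans hw₁.symm))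
  simpa [h₁, sub_eq_zero] using hdiff

end NormalFormMap

section IdealPiece

lemma idealPiece_le_degSub (hhom : NHomogLC1 K X N R) (a : ℕ) :
    idealPiece K X N R a ≤ degSub K X a := by
  rw [idealPiece]
  by_cases haN : a < N
  · rw [if_pos haN]
    exact bot_le
  rw [if_neg haN]
  refine iSup₂_le fun i hi => Submodule.mul_le.mpr fun x hx y hy => ?_
  have hR : Submodule.span K R ≤ degSub K X N := Submodule.span_le.mpr fun g hg => (hhom g hg).1
  have hiR : degSub K X i * Submodule.span K R ≤ degSub K X (i + N) :=
    Submodule.mul_le.mpr fun p hp r hr => mul_mem_degSub hp (hR hr)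
  have harith : i + N + (a - N - i) = a := by rw [Finset.mem_range] at hi; omega
  have hxy := mul_mem_degSub (hiR hx) hy
  rwa [harith] at hxy

lemma genSpan_le_idealPiece (hhom : NHomogLC1 K X N R) (a : ℕ) :
    genSpan R {w | wlen X w = a} ≤ idealPiece K X N R a := by
  rw [genSpan, Submodule.span_le]
  rintro _ ⟨u, v, g, hg, hlen, rfl⟩
  have hlen' : wlen X u + N + wlen X v = a := by
    rw [← hlen, wlen_mul, wlen_mul, hhom.wlen_lm hg]
  rw [SetLike.mem_coe, idealPiece, if_neg (by omega)]
  refine Submodule.mem_iSup_of_mem (wlen X u) (Submodule.mem_iSup_of_mem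
    (Finset.mem_range.mpr (by omega)) ?_)
  exact Submodule.mul_mem_mul (Submodule.mul_mem_mul (wd_mem_degSub rfl)
    (Submodule.subset_span hg)) (wd_mem_degSub (by omega))

lemma mul_mul_mem_of_forall_conj_mem {M : Submodule K (F K X)}
    (h : ∀ u v, ∀ g ∈ R, wd K X u * g * wd K X v ∈ M) (p q : F K X) {r : F K X}
    (hr : r ∈ Submodule.span K R) : p * r * q ∈ M := by
  refine (Submodule.span_le (p := M.comap (LinearMap.mulRight K q ∘ₗ LinearMap.mulLeft K p))).mpr
    (fun g hg => ?_) hr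
  change p * g * q ∈ M
  rw [← sum_smul_wd p, ← sum_smul_wd q]
  simp only [Finsupp.sum, Finset.sum_mul, Finset.mul_sum, smul_mul_assoc, mul_smul_comm]
  exact sum_mem fun v _ => M.smul_mem _ (sum_mem fun u _ => M.smul_mem _ (h u v g hg))

lemma idealPiece_le_ker (h : ∀ u v, ∀ g ∈ R, phi (wd K X u * g * wd K X v) = 0) (a : ℕ) :
    idealPiece K X N R a ≤ LinearMap.ker phi := by
  rw [idealPiece]
  by_cases haN : a < N
  · rw [if_pos haN]
    exact bot_le
  rw [if_neg haN]
  refine iSup₂_le fun i _ => Submodule.mul_le.mpr fun x hx q _ => ?_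
  have hiR : degSub K X i * Submodule.span K R ≤
      (LinearMap.ker phi).comap (LinearMap.mulRight K q) :=
    Submodule.mul_le.mpr fun p _ r hr => Submodule.mem_comap.mpr <|
      mul_mul_mem_of_forall_conj_mem (fun u v g hg => LinearMap.mem_ker.mpr (h u v g hg)) p q hr
  exact hiR hx

end IdealPiece

section Main

variable (hhom : NHomogLC1 K X N R) (hphi : ∀ f : F K X, NormalFormOf K X R f (phi f))
include hhom hphi

lemma phi_mem_degSub {a : ℕ} {f : F K X} (hf : f ∈ degSub K X a) : phi f ∈ degSub K X a := by
  rw [degSub_eq_supportedIn] at hf ⊢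
  exact ((hphi f).mem_supportedIn hhom (isLexLower_setOf_wlen_eq a) hf).1

lemma phi_wd_mem_supportedIn_lexBelow {u : FreeMonoid X} (hu : ¬ IsNormalForm K X R (wd K X u)) :
    phi (wd K X u) ∈ supportedIn K (lexBelow u) := by
  have hS : IsLexLower {x | wlen X x = wlen X u ∧ x ≤ u} :=
    fun x y hxy hle hy => ⟨hxy.trans hy.1, hle.trans hy.2⟩
  have hle := ((hphi _).mem_supportedIn hhom hS (wd_mem_supportedIn.mpr ⟨rfl, le_rfl⟩)).1
  obtain ⟨u', v', g, hg, rfl⟩ := exists_eq_of_not_isNormalForm_wd hu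
  refine mem_supportedIn.mpr fun x hx => ?_
  obtain ⟨hlen, hxle⟩ := mem_supportedIn.mp hle x hx
  refine ⟨hlen, hxle.lt_of_ne ?_⟩
  rintro rfl
  exact Finsupp.mem_support_iff.mp hx ((hphi _).1.coeff_eq_zero hhom hg u' v')

theorem isRedOp_applyLeft (a b : ℕ) : IsRedOp K X (a + b) (applyLeft K X phi a b) where
  idem := linearMap_ext_wd fun w => by
    by_cases hw : wlen X w = a + b
    · obtain ⟨u, v, rfl, hu, hv⟩ := exists_mul_of_wlen_eq_add hw
      rw [LinearMap.comp_apply, applyLeft_wd_mul _ hu hv,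
        applyLeft_mul _ (phi_mem_degSub hhom hphi (wd_mem_degSub hu)) (wd_mem_degSub hv),
        (hphi _).eq_of_isNormalForm (hphi _).1]
    · rw [LinearMap.comp_apply, applyLeft_wd_of_wlen_ne _ hw, applyLeft_wd_of_wlen_ne _ hw]
  le w hw := by
    obtain ⟨u, v, rfl, hu, hv⟩ := exists_mul_of_wlen_eq_add hw
    rw [applyLeft_wd_mul _ hu hv]
    by_cases hn : IsNormalForm K X R (wd K X u)
    · exact Or.inl (by rw [(hphi _).eq_of_isNormalForm hn, wd_mul_wd])
    right
    have hmem : 1 * phi (wd K X u) * wd K X v ∈ supportedIn K (lexBelow (u * v)) := by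
      refine mul_mul_mem_of_forall_wd_mem fun y hy => ?_
      obtain ⟨hylen, hylt⟩ :=
        mem_supportedIn.mp (phi_wd_mem_supportedIn_lexBelow hhom hphi hn) y hy
      rw [one_mul, wd_mul_wd, wd_mem_supportedIn]
      exact ⟨by rw [wlen_mul, wlen_mul, hylen],
        by simpa using mul_mul_lt_mul_mul hylt hylen 1 v v⟩
    rw [one_mul, mem_supportedIn] at hmem
    exact ⟨fun x hx => (hmem x hx).1.trans hw, fun x hx => (hmem x hx).2⟩
  other _ hw := applyLeft_wd_of_wlen_ne _ hw

lemma sub_applyLeft_mem (a b : ℕ) (f : F K X) :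
    f - applyLeft K X phi a b f ∈ idealPiece K X N R a * degSub K X b := by
  suffices h : f ∈ (idealPiece K X N R a * degSub K X b).comap
      (LinearMap.id - applyLeft K X phi a b) from h
  refine mem_of_forall_wd_mem fun w _ => ?_
  by_cases hw : wlen X w = a + b
  · obtain ⟨u, v, rfl, hu, hv⟩ := exists_mul_of_wlen_eq_add hw
    have hgen := ((hphi (wd K X u)).mem_supportedIn hhom (isLexLower_setOf_wlen_eq a)
      (wd_mem_supportedIn.mpr hu)).2
    change wd K X (u * v) - applyLeft K X phi a b (wd K X (u * v)) ∈
      idealPiece K X N R a * degSub K X b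
    rw [applyLeft_wd_mul _ hu hv, ← wd_mul_wd, ← sub_mul]
    exact Submodule.mul_mem_mul (genSpan_le_idealPiece hhom a hgen) (wd_mem_degSub hv)
  · simp [applyLeft_wd_of_wlen_ne _ hw]

theorem ker_applyLeft (hred : Reduced K X R) (hside : SideConfluent K X N R) (a b : ℕ) :
    LinearMap.ker (applyLeft K X phi a b) = idealPiece K X N R a * degSub K X b := by
  refine le_antisymm (fun f hf => ?_) (Submodule.mul_le.mpr fun p hp q hq => ?_)
  · simpa [LinearMap.mem_ker.mp hf] using sub_applyLeft_mem hhom hphi a b f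
  · rw [LinearMap.mem_ker, applyLeft_mul _ (idealPiece_le_degSub hhom a hp) hq,
      idealPiece_le_ker (fun u v g hg => phi_conj_eq_zero hhom hphi hred hside hg u v) a hp,
      zero_mul]

end Main

end CC

open CC in
theorem stmt15_general (K : Type*) [Field K] (X : Type*) [Fintype X] [LinearOrder X]
    (N : ℕ) (R : Set (F K X))
    (hhom : NHomogLC1 K X N R) (hred : Reduced K X R)
    (hside : SideConfluent K X N R)
    (phi : F K X →ₗ[K] F K X) (hphi : ∀ f : F K X, NormalFormOf K X R f (phi f)) :
    (∀ n m : ℕ, lN N n ≤ m →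
      IsRedOp K X m (applyLeft K X phi (m - lN N n) (lN N n)) ∧
      LinearMap.ker (applyLeft K X phi (m - lN N n) (lN N n)) = ker1 K X N R n m) ∧
    (∀ m : ℕ,
      IsRedOp K X m (applyLeft K X phi m 0) ∧
      LinearMap.ker (applyLeft K X phi m 0) = idealPiece K X N R m) := by
  refine ⟨fun n m hnm => ⟨?_, ker_applyLeft hhom hphi hred hside _ _⟩,
    fun m => ⟨isRedOp_applyLeft hhom hphi m 0, ?_⟩⟩
  · simpa only [Nat.sub_add_cancel hnm] using isRedOp_applyLeft hhom hphi (m - lN N n) (lN N n)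
  · rw [ker_applyLeft hhom hphi hred hside, degSub_zero, mul_one]

open CC in
/-- Suppose the reduced `N`-homogeneous presentation `⟨X|R⟩` is
side-confluent and let `φ : K⟨X⟩ → K⟨X⟩` be the linear map sending each element to its unique
normal form.  Then for all `n ≥ 0` and `m ≥ l_N(n)`, the operator
`φ|_{V^{⊗m−l_N(n)}} ⊗ id_{V^{⊗l_N(n)}}` is a reduction operator relative to `X^{(m)}` whose
kernel equals `I(R)_{m−l_N(n)} ⊗ V^{⊗l_N(n)}`; hence it equals `F_1^{n,m}`.  In particular
(case `n = 0`), the restriction of `φ` to `V^{⊗m}` is a reduction operator relative to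
`X^{(m)}` with kernel `I(R)_m`. -/
theorem stmt15 (K : Type*) [Field K] (X : Type*) [Fintype X] [LinearOrder X]
    (N : ℕ) (hN : 2 ≤ N) (R : Set (F K X))
    (hhom : NHomogLC1 K X N R) (hred : Reduced K X R)
    (hside : SideConfluent K X N R)
    (phi : F K X →ₗ[K] F K X) (hphi : ∀ f : F K X, NormalFormOf K X R f (phi f)) :
    (∀ n m : ℕ, lN N n ≤ m →
      IsRedOp K X m (applyLeft K X phi (m - lN N n) (lN N n)) ∧
      LinearMap.ker (applyLeft K X phi (m - lN N n) (lN N n)) = ker1 K X N R n m) ∧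
    (∀ m : ℕ,
      IsRedOp K X m (applyLeft K X phi m 0) ∧
      LinearMap.ker (applyLeft K X phi m 0) = idealPiece K X N R m) :=
  stmt15_general K X N R hhom hred hside phi hphi
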